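/- The differential logical relation is invariant under evaluation: for all closed terms M, N ∈ CT(τ) and d ∈ D⟦τ⟧, if M ⇓ V and N ⇓ W, then δ_τ(M, d, N) holds if and only if δ_τ(V, d, W) holds. -/

import Mathlib

open scoped ENNReal

/-- Types of ST^λ_ℝ. -/
inductive Ty : Type
  | real : Ty
  | arrow : Ty → Ty → Ty
  | prod : Ty → Ty → Ty

/-- REAL^(n+1), as a left-nested product. -/
def realPow : ℕ → Ty
  | 0 => .real
  | n + 1 => .prod (realPow n) .real

/-- Terms of ST^λ_ℝ (de Bruijn indices); `fn n f` is a function symbol of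
arity `n+1` denoting the total function `f : ℝ^(n+1) → ℝ`. -/
inductive Tm : Type
  | var : ℕ → Tm
  | const : ℝ → Tm
  | fn : (n : ℕ) → ((Fin (n + 1) → ℝ) → ℝ) → Tm
  | lam : Tm → Tm
  | app : Tm → Tm → Tm
  | pair : Tm → Tm → Tm
  | proj1 : Tm
  | proj2 : Tm
  | ifz : Tm → Tm → Tm
  | iter : Tm → Tm → Tm

/-- The predecessor function symbol `pred₁ ∈ F₁`. -/
def predTm : Tm := .fn 0 (fun v => v 0 - 1)

/-- Typing judgment `Γ ⊢ M : τ`. -/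
inductive HasTy : List Ty → Tm → Ty → Type
  | var {Γ n τ} (h : Γ[n]? = some τ) : HasTy Γ (.var n) τ
  | const {Γ r} : HasTy Γ (.const r) .real
  | fn {Γ n f} : HasTy Γ (.fn n f) (.arrow (realPow n) .real)
  | lam {Γ t τ ρ} : HasTy (τ :: Γ) t ρ → HasTy Γ (.lam t) (.arrow τ ρ)
  | app {Γ t u τ ρ} : HasTy Γ t (.arrow τ ρ) → HasTy Γ u τ → HasTy Γ (.app t u) ρ
  | pair {Γ t u τ ρ} : HasTy Γ t τ → HasTy Γ u ρ → HasTy Γ (.pair t u) (.prod τ ρ)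
  | proj1 {Γ τ ρ} : HasTy Γ .proj1 (.arrow (.prod τ ρ) τ)
  | proj2 {Γ τ ρ} : HasTy Γ .proj2 (.arrow (.prod τ ρ) ρ)
  | ifz {Γ t u τ} : HasTy Γ t τ → HasTy Γ u τ → HasTy Γ (.ifz t u) (.arrow .real τ)
  | iter {Γ t u τ} : HasTy Γ t (.arrow τ τ) → HasTy Γ u τ → HasTy Γ (.iter t u) (.arrow .real τ)

/-- Values. -/
inductive IsValue : Tm → Prop
  | const {r} : IsValue (.const r)
  | fn {n f} : IsValue (.fn n f)
  | lam {t} : IsValue (.lam t)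
  | pair {t u} : IsValue (.pair t u)
  | proj1 : IsValue .proj1
  | proj2 : IsValue .proj2
  | ifz {t u} : IsValue (.ifz t u)
  | iter {t u} : IsValue (.iter t u)

/-- All free variables are `< k`. -/
def ClosedUnder (k : ℕ) : Tm → Prop
  | .var n => n < k
  | .const _ => True
  | .fn _ _ => True
  | .lam t => ClosedUnder (k + 1) t
  | .app t u => ClosedUnder k t ∧ ClosedUnder k u
  | .pair t u => ClosedUnder k t ∧ ClosedUnder k u
  | .proj1 => True
  | .proj2 => True
  | .ifz t u => ClosedUnder k t ∧ ClosedUnder k u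
  | .iter t u => ClosedUnder k t ∧ ClosedUnder k u

/-- Renaming of de Bruijn variables. -/
def rename (f : ℕ → ℕ) : Tm → Tm
  | .var n => .var (f n)
  | .const r => .const r
  | .fn n g => .fn n g
  | .lam t => .lam (rename (fun n => match n with | 0 => 0 | m + 1 => f m + 1) t)
  | .app t u => .app (rename f t) (rename f u)
  | .pair t u => .pair (rename f t) (rename f u)
  | .proj1 => .proj1
  | .proj2 => .proj2
  | .ifz t u => .ifz (rename f t) (rename f u)
  | .iter t u => .iter (rename f t) (rename f u)

/-- Simultaneous substitution. -/
def subst (σ : ℕ → Tm) : Tm → Tm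
  | .var n => σ n
  | .const r => .const r
  | .fn n g => .fn n g
  | .lam t => .lam (subst (fun n => match n with | 0 => .var 0 | m + 1 => rename Nat.succ (σ m)) t)
  | .app t u => .app (subst σ t) (subst σ u)
  | .pair t u => .pair (subst σ t) (subst σ u)
  | .proj1 => .proj1
  | .proj2 => .proj2
  | .ifz t u => .ifz (subst σ t) (subst σ u)
  | .iter t u => .iter (subst σ t) (subst σ u)

/-- `subst1 s t` is `t{s/x}` for the top variable. -/
def subst1 (s t : Tm) : Tm :=
  subst (fun n => match n with | 0 => s | m + 1 => .var m) t

mutual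
  /-- Big-step call-by-value evaluation `M ⇓ V`. -/
  inductive Eval : Tm → Tm → Prop
    | value {V} : IsValue V → Eval V V
    | appLam {M N L V W} : Eval M (.lam L) → Eval N V → Eval (subst1 V L) W →
        Eval (.app M N) W
    | appFn {M N n f V r} : Eval M (.fn n f) → Eval N V → EvalTuple n V r →
        Eval (.app M N) (.const (f r))
    | appProj1 {M N L P V} : Eval M .proj1 → Eval N (.pair L P) → Eval L V →
        Eval (.app M N) V
    | appProj2 {M N L P V} : Eval M .proj2 → Eval N (.pair L P) → Eval P V →
        Eval (.app M N) V
    | appIfzLt {M N L P r V} : Eval M (.ifz L P) → Eval N (.const r) → r < 0 → Eval L V →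
        Eval (.app M N) V
    | appIfzGe {M N L P r V} : Eval M (.ifz L P) → Eval N (.const r) → 0 ≤ r → Eval P V →
        Eval (.app M N) V
    | appIterLt {M N L P r V} : Eval M (.iter L P) → Eval N (.const r) → r < 0 → Eval P V →
        Eval (.app M N) V
    | appIterGe {M N L P r V} : Eval M (.iter L P) → Eval N (.const r) → 0 ≤ r →
        Eval (.app L (.app (.iter L P) (.app predTm (.const r)))) V →
        Eval (.app M N) V

  /-- Evaluation of an `(n+1)`-tuple `⟨L₁, …, L_{n+1}⟩` of reals. -/
  inductive EvalTuple : (n : ℕ) → Tm → (Fin (n + 1) → ℝ) → Prop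
    | zero {L x} : Eval L (.const x) → EvalTuple 0 L (fun _ => x)
    | succ {n L P r x} : EvalTuple n L r → Eval P (.const x) →
        EvalTuple (n + 1) (.pair L P) (Fin.snoc r x)
end

/-- Closed terms of type τ. -/
def CT (τ : Ty) : Set Tm := {M | Nonempty (HasTy [] M τ)}

/-- Closed values of type τ. -/
def CV (τ : Ty) : Set Tm := {M | IsValue M ∧ Nonempty (HasTy [] M τ)}

/-- Set-theoretic semantics of types. -/
@[reducible] def Sem : Ty → Type
  | .real => ℝ
  | .arrow τ ρ => Sem τ → Sem ρ
  | .prod τ ρ => Sem τ × Sem ρ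

/-- Semantics of environments. -/
@[reducible] def SemCtx : List Ty → Type
  | [] => PUnit
  | τ :: Γ => Sem τ × SemCtx Γ

def lookupSem : (Γ : List Ty) → (n : ℕ) → {τ : Ty} → Γ[n]? = some τ → SemCtx Γ → Sem τ
  | [], n, _, h, _ => by simp at h
  | _ :: _, 0, _, h, env => by
      rw [List.getElem?_cons_zero, Option.some_inj] at h
      exact h ▸ env.1
  | _ :: Γ, n + 1, _, h, env => lookupSem Γ n (by simpa using h) env.2

def tupleSem : (n : ℕ) → Sem (realPow n) → (Fin (n + 1) → ℝ)
  | 0, x => fun _ => x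
  | n + 1, p => Fin.snoc (tupleSem n p.1) p.2

/-- Set-theoretic semantics of typed terms. -/
noncomputable def sem : {Γ : List Ty} → {M : Tm} → {τ : Ty} → HasTy Γ M τ → SemCtx Γ → Sem τ
  | _, _, _, .var (n := n) h, env => lookupSem _ n h env
  | _, _, _, .const (r := r), _ => r
  | _, _, _, .fn (n := n) (f := f), _ => fun v => f (tupleSem n v)
  | _, _, _, .lam d, env => fun a => sem d (a, env)
  | _, _, _, .app d e, env => (sem d env) (sem e env)
  | _, _, _, .pair d e, env => (sem d env, sem e env)
  | _, _, _, .proj1, _ => Prod.fst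
  | _, _, _, .proj2, _ => Prod.snd
  | _, _, _, .ifz d e, env => fun r => if r < 0 then sem d env else sem e env
  | _, _, _, .iter d e, env => fun r => (sem d env)^[if r < 0 then 0 else ⌊r⌋.toNat + 1] (sem e env)

/-- Difference spaces `D⟦τ⟧`. -/
@[reducible] def Diff : Ty → Type
  | .real => ℝ≥0∞
  | .arrow τ ρ => Sem τ × Diff τ → Diff ρ
  | .prod τ ρ => Diff τ × Diff ρ

/-- The order `≤_τ` on `D⟦τ⟧`. -/
def DiffLe : (τ : Ty) → Diff τ → Diff τ → Prop
  | .real => fun d e => d ≤ e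
  | .arrow τ ρ => fun f g => ∀ (x : Sem τ) (d : Diff τ), DiffLe ρ (f (x, d)) (g (x, d))
  | .prod τ ρ => fun d e => DiffLe τ d.1 e.1 ∧ DiffLe ρ d.2 e.2

/-- Suprema in `D⟦τ⟧`, computed pointwise/componentwise. -/
noncomputable def diffSup : (τ : Ty) → Set (Diff τ) → Diff τ
  | .real => sSup
  | .arrow τ ρ => fun S p => diffSup ρ ((fun f => f p) '' S)
  | .prod τ ρ => fun S => (diffSup τ (Prod.fst '' S), diffSup ρ (Prod.snd '' S))

/-- Quantale multiplication `⊕_τ` on `D⟦τ⟧`. -/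
noncomputable def diffAdd : (τ : Ty) → Diff τ → Diff τ → Diff τ
  | .real => fun d e => d + e
  | .arrow τ ρ => fun f g p => diffAdd ρ (f p) (g p)
  | .prod τ ρ => fun d e => (diffAdd τ d.1 e.1, diffAdd ρ d.2 e.2)

/-- The differential logical relation `δ_τ ⊆ CT(τ) × D⟦τ⟧ × CT(τ)`. -/
def Dlr : (τ : Ty) → Tm → Diff τ → Tm → Prop
  | .real => fun M r N => ∃ x y : ℝ,
      Eval M (.const x) ∧ Eval N (.const y) ∧ ENNReal.ofReal |x - y| ≤ r
  | .prod τ ρ => fun M d N =>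
      Dlr τ (.app .proj1 M) d.1 (.app .proj1 N) ∧ Dlr ρ (.app .proj2 M) d.2 (.app .proj2 N)
  | .arrow τ ρ => fun M d N =>
      ∀ (V W : Tm) (hV : HasTy [] V τ), HasTy [] W τ → IsValue V → IsValue W →
        ∀ y : Diff τ, Dlr τ V y W →
          Dlr ρ (.app M V) (d (sem hV PUnit.unit, y)) (.app N W) ∧
          Dlr ρ (.app M W) (d (sem hV PUnit.unit, y)) (.app N V)

/-- `N_τ ⊆ D⟦τ⟧`: distances witnessing program equivalence. -/
def NullD : (τ : Ty) → Diff τ → Prop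
  | .real => fun d => d = 0
  | .arrow τ ρ => fun f => ∀ (x : Sem τ) (y : Diff τ), NullD τ y → NullD ρ (f (x, y))
  | .prod τ ρ => fun d => NullD τ d.1 ∧ NullD ρ d.2

/-- `Fin_τ ⊆ D⟦τ⟧`: finite distances. -/
def FinD : (τ : Ty) → Diff τ → Prop
  | .real => fun d => d ≠ ∞
  | .arrow τ ρ => fun f => ∀ (x : Sem τ) (d : Diff τ), FinD τ d → FinD ρ (f (x, d))
  | .prod τ ρ => fun d => FinD τ d.1 ∧ FinD ρ d.2

/-- Reducibility: values. -/
def VRed : Ty → Tm → Prop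
  | .real => fun V => ∃ r : ℝ, V = .const r
  | .arrow τ ρ => fun V => ∀ W, VRed τ W → ∃ U, Eval (.app V W) U ∧ VRed ρ U
  | .prod τ ρ => fun V => ∃ M N, V = .pair M N ∧
      (∃ U, Eval M U ∧ VRed τ U) ∧ (∃ U, Eval N U ∧ VRed ρ U)

/-- Reducibility: terms. -/
def Red (τ : Ty) (M : Tm) : Prop := ∃ V, Eval M V ∧ VRed τ V

/-- Difference spaces for environments. -/
@[reducible] def DiffCtx : List Ty → Type
  | [] => PUnit
  | τ :: Γ => Diff τ × DiffCtx Γ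

/-- A closed, typed value of type τ. -/
structure TVal (τ : Ty) where
  tm : Tm
  isVal : IsValue tm
  hty : HasTy [] tm τ

/-- Γ-families of values. -/
@[reducible] def Fam : List Ty → Type
  | [] => PUnit
  | τ :: Γ => TVal τ × Fam Γ

/-- A Γ-family of values as a substitution. -/
def famSubst : {Γ : List Ty} → Fam Γ → ℕ → Tm
  | [], _, n => .var n
  | _ :: _, F, 0 => F.1.tm
  | _ :: _, F, n + 1 => famSubst F.2 n

/-- Denotation `⟦𝐕⟧` of a Γ-family of values. -/
noncomputable def famSem : {Γ : List Ty} → Fam Γ → SemCtx Γ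
  | [], _ => PUnit.unit
  | _ :: _, F => (sem F.1.hty PUnit.unit, famSem F.2)

/-- `δ_Γ(𝐕, α, 𝐖)`. -/
def DlrFam : (Γ : List Ty) → Fam Γ → DiffCtx Γ → Fam Γ → Prop
  | [], _, _, _ => True
  | τ :: Γ, V, α, W => Dlr τ V.1.tm α.1 W.1.tm ∧ DlrFam Γ V.2 α.2 W.2

/-- Boolean maps `B : dom(Γ) → {0,1}`. -/
@[reducible] def BFam : List Ty → Type
  | [] => PUnit
  | _ :: Γ => Bool × BFam Γ

/-- The mixed substitution `⟨𝐕,𝐖⟩_B`. -/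
def famMix : {Γ : List Ty} → Fam Γ → Fam Γ → BFam Γ → Fam Γ
  | [], _, _, _ => PUnit.unit
  | _ :: _, V, W, B => (if B.1 then W.1 else V.1, famMix V.2 W.2 B.2)

/-- Weak boundedness of a real function. -/
def WeaklyBounded {n : ℕ} (f : (Fin (n + 1) → ℝ) → ℝ) : Prop :=
  ∀ S : Set (Fin (n + 1) → ℝ), Bornology.IsBounded S → Bornology.IsBounded (f '' S)

/-- A term is weakly bounded iff every function symbol occurring in it is. -/
def WBTm : Tm → Prop
  | .var _ => True
  | .const _ => True
  | .fn _ f => WeaklyBounded f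
  | .lam t => WBTm t
  | .app t u => WBTm t ∧ WBTm u
  | .pair t u => WBTm t ∧ WBTm u
  | .proj1 => True
  | .proj2 => True
  | .ifz t u => WBTm t ∧ WBTm u
  | .iter t u => WBTm t ∧ WBTm u

/-! Evaluation is deterministic, so a term that evaluates to `V` has exactly the evaluation
behaviour of `V`; and `δ_τ` only ever inspects its terms through evaluation, in evaluation
contexts `π₁ [·]`, `π₂ [·]` and `[·] V` that respect this behaviour. -/

theorem Eval.isValue {M V : Tm} (h : Eval M V) : IsValue V := by
  induction h using Eval.rec (motive_2 := fun _ _ _ _ => True) <;>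
    first | trivial | assumption | exact .const

theorem Eval.det {M V V' : Tm} (h : Eval M V) (h' : Eval M V') : V = V' := by
  induction h using Eval.rec (motive_2 := fun n L r _ => ∀ r', EvalTuple n L r' → r = r')
    generalizing V'
  case value hv => cases hv <;> cases h' <;> rfl
  case appFn ihM ihN ihT =>
    cases h' with
    | value hv => cases hv
    | appFn hM hN hT => cases ihM hM; cases ihN hN; cases ihT _ hT; rfl
    | _ => grind
  case zero ih _ h' => cases h' with | zero hL => cases ih hL; rfl
  case succ ihT ihP _ h' => cases h' with | succ hT hP => cases ihT _ hT; cases ihP hP; rfl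
  -- The value of the head (and the sign of the argument) selects the rule, so both
  -- derivations use the same one and the induction hypotheses identify the results.
  all_goals cases h' with
    | value hv => cases hv
    | _ => grind

def EvalEquiv (M M' : Tm) : Prop := ∀ U, Eval M U ↔ Eval M' U

namespace EvalEquiv

theorem refl (M : Tm) : EvalEquiv M M := fun _ => Iff.rfl

theorem symm {M M' : Tm} (h : EvalEquiv M M') : EvalEquiv M' M := fun U => (h U).symm

theorem of_eval {M V : Tm} (h : Eval M V) : EvalEquiv M V := fun _ =>
  ⟨fun hU => h.det hU ▸ .value h.isValue,
   fun hU => (Eval.value h.isValue).det hU ▸ h⟩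

theorem eval_app {M M' N N' U : Tm} (hM : EvalEquiv M M') (hN : EvalEquiv N N')
    (h : Eval (.app M N) U) : Eval (.app M' N') U := by
  cases h with
  | value hv => cases hv
  | appLam h₁ h₂ h₃ => exact .appLam ((hM _).1 h₁) ((hN _).1 h₂) h₃
  | appFn h₁ h₂ h₃ => exact .appFn ((hM _).1 h₁) ((hN _).1 h₂) h₃
  | appProj1 h₁ h₂ h₃ => exact .appProj1 ((hM _).1 h₁) ((hN _).1 h₂) h₃
  | appProj2 h₁ h₂ h₃ => exact .appProj2 ((hM _).1 h₁) ((hN _).1 h₂) h₃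
  | appIfzLt h₁ h₂ hr h₃ => exact .appIfzLt ((hM _).1 h₁) ((hN _).1 h₂) hr h₃
  | appIfzGe h₁ h₂ hr h₃ => exact .appIfzGe ((hM _).1 h₁) ((hN _).1 h₂) hr h₃
  | appIterLt h₁ h₂ hr h₃ => exact .appIterLt ((hM _).1 h₁) ((hN _).1 h₂) hr h₃
  | appIterGe h₁ h₂ hr h₃ => exact .appIterGe ((hM _).1 h₁) ((hN _).1 h₂) hr h₃

theorem app {M M' N N' : Tm} (hM : EvalEquiv M M') (hN : EvalEquiv N N') :
    EvalEquiv (.app M N) (.app M' N') := fun _ =>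
  ⟨hM.eval_app hN, hM.symm.eval_app hN.symm⟩

end EvalEquiv

theorem Dlr.of_evalEquiv {τ : Ty} {M M' N N' : Tm} {d : Diff τ} (h : Dlr τ M d N)
    (hM : EvalEquiv M M') (hN : EvalEquiv N N') : Dlr τ M' d N' := by
  induction τ generalizing M M' N N' with
  | real =>
    obtain ⟨x, y, hx, hy, hxy⟩ := h
    exact ⟨x, y, (hM _).1 hx, (hN _).1 hy, hxy⟩
  | prod τ ρ ihτ ihρ =>
    have proj {P Q Q' : Tm} (hQ : EvalEquiv Q Q') : EvalEquiv (.app P Q) (.app P Q') :=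
      (EvalEquiv.refl P).app hQ
    exact ⟨ihτ h.1 (proj hM) (proj hN), ihρ h.2 (proj hM) (proj hN)⟩
  | arrow τ ρ _ ihρ =>
    intro V W hV hW hVval hWval y hy
    obtain ⟨hVW, hWV⟩ := h V W hV hW hVval hWval y hy
    have head {P Q Q' : Tm} (hQ : EvalEquiv Q Q') : EvalEquiv (.app Q P) (.app Q' P) :=
      hQ.app (EvalEquiv.refl P)
    exact ⟨ihρ hVW (head hM) (head hN), ihρ hWV (head hM) (head hN)⟩

/-- the differential logical relation is invariant under evaluation. -/
theorem dlr_eval_invariant (τ : Ty) (M N V W : Tm) (hM : M ∈ CT τ) (hN : N ∈ CT τ)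
    (d : Diff τ) (hV : Eval M V) (hW : Eval N W) :
    Dlr τ M d N ↔ Dlr τ V d W := by
  have hMV := EvalEquiv.of_eval hV
  have hNW := EvalEquiv.of_eval hW
  exact ⟨fun h => h.of_evalEquiv hMV hNW, fun h => h.of_evalEquiv hMV.symm hNW.symm⟩
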